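/- Let f : ℝⁿ → ℝ be convex differentiable, g proper closed convex, F = f + g, τ > 0. Suppose x⁺ satisfies the exact proximal gradient inclusion 0 ∈ ∇f(x) − τ(x − x⁺) + ∂g(x⁺), and the descent condition D_f(x⁺, x) ≤ (τ/2)‖x − x⁺‖². Then for all z ∈ ℝⁿ: 0 ≤ F(z) − F(x⁺) + (τ/2)‖x − z‖² − (τ/2)‖z − x⁺‖². (Exact proximal gradient inequality.) -/

import Mathlib

open scoped RealInnerProductSpace

/-- The ε-subdifferential of `g` at `xb` (with `ε = 0` this is the Fenchel
subdifferential). -/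
def epsSubdiff {n : ℕ} (g : EuclideanSpace ℝ (Fin n) → EReal) (ε : ℝ)
    (xb : EuclideanSpace ℝ (Fin n)) : Set (EuclideanSpace ℝ (Fin n)) :=
  {v | ∀ x, ((⟪v, x - xb⟫ : ℝ) : EReal) + g xb ≤ g x + (ε : EReal)}

/-- Gradient inequality for convex functions. -/
lemma convexOn_gradient_ineq {n : ℕ} (f : EuclideanSpace ℝ (Fin n) → ℝ)
    (hf : ConvexOn ℝ Set.univ f) (x y : EuclideanSpace ℝ (Fin n))
    (v : EuclideanSpace ℝ (Fin n)) (hx : HasGradientAt f v x) :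
    f x + ⟪v, y - x⟫ ≤ f y := by
  set φ : ℝ → ℝ := fun t => f (x + t • (y - x)) with hφ
  have hline : HasDerivAt (fun t : ℝ => x + t • (y - x)) (y - x) 0 := by
    simpa using ((hasDerivAt_id (0 : ℝ)).smul_const (y - x)).const_add x
  have hderiv : HasDerivAt φ ⟪v, y - x⟫ 0 := by
    have hx' : HasFDerivAt f ((InnerProductSpace.toDual ℝ _) v) (x + (0:ℝ) • (y - x)) := by
      simpa using hx.hasFDerivAt
    have := hx'.comp_hasDerivAt 0 hline
    simpa [hφ, real_inner_comm, Function.comp_def] using this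
  have hslope : Filter.Tendsto (slope φ 0) (nhdsWithin 0 (Set.Ioi 0)) (nhds ⟪v, y - x⟫) := by
    have := (hderiv.hasDerivWithinAt (s := Set.Ioi 0))
    rw [hasDerivWithinAt_iff_tendsto_slope] at this
    simpa [Set.diff_singleton_eq_self (by simp : (0:ℝ) ∉ Set.Ioi 0)] using this
  have hbound : ∀ᶠ t in nhdsWithin (0:ℝ) (Set.Ioi 0), slope φ 0 t ≤ f y - f x := by
    filter_upwards [Ioo_mem_nhdsGT_of_mem (by norm_num : (0:ℝ) ∈ Set.Ico 0 1)] with t ht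
    have ht0 : 0 < t := ht.1
    have ht1 : t < 1 := ht.2
    have hcvx := hf.2 (Set.mem_univ x) (Set.mem_univ y) (by linarith : 0 ≤ 1 - t)
      (le_of_lt ht0) (by ring)
    have hxe : (1 - t) • x + t • y = x + t • (y - x) := by
      module
    rw [hxe] at hcvx
    have hse : slope φ 0 t = (f (x + t • (y - x)) - f x) / t := by
      simp [slope_def_field, hφ]
    rw [hse, div_le_iff₀ ht0]
    rw [smul_eq_mul, smul_eq_mul] at hcvx
    nlinarith [hcvx]
  have := le_of_tendsto hslope hbound
  linarith

/-- **Exact proximal gradient inequality.** If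
`0 ∈ ∇f(x) − τ(x − x⁺) + ∂g(x⁺)` and `D_f(x⁺, x) ≤ (τ/2)‖x − x⁺‖²`, then
for all `z`: `0 ≤ F(z) − F(x⁺) + (τ/2)‖x − z‖² − (τ/2)‖z − x⁺‖²`, written
additively as `F(x⁺) + (τ/2)‖z − x⁺‖² ≤ F(z) + (τ/2)‖x − z‖²`. -/
theorem stmt5 {n : ℕ} (f : EuclideanSpace ℝ (Fin n) → ℝ)
    (hf : ConvexOn ℝ Set.univ f)
    (f' : EuclideanSpace ℝ (Fin n) → EuclideanSpace ℝ (Fin n))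
    (hf' : ∀ x, HasGradientAt f (f' x) x)
    (g : EuclideanSpace ℝ (Fin n) → EReal)
    (hlsc : LowerSemicontinuous g)
    (hconv : Convex ℝ {p : EuclideanSpace ℝ (Fin n) × ℝ | g p.1 ≤ (p.2 : EReal)})
    (hproper_top : ∃ x, g x ≠ ⊤) (hproper_bot : ∀ x, g x ≠ ⊥)
    (F : EuclideanSpace ℝ (Fin n) → EReal)
    (hF : F = fun z => (f z : EReal) + g z)
    (τ : ℝ) (hτ : 0 < τ)
    (x xp : EuclideanSpace ℝ (Fin n))
    (hincl : ∃ v ∈ epsSubdiff g 0 xp, f' x - τ • (x - xp) + v = 0)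
    (hls : f xp - f x - ⟪f' x, xp - x⟫ ≤ τ / 2 * ‖x - xp‖ ^ 2) :
    ∀ z, F xp + ((τ / 2 * ‖z - xp‖ ^ 2 : ℝ) : EReal)
      ≤ F z + ((τ / 2 * ‖x - z‖ ^ 2 : ℝ) : EReal) := by
  obtain ⟨v, hv, hveq⟩ := hincl
  -- g xp is finite
  have hxp_ne_top : g xp ≠ ⊤ := by
    intro htop
    obtain ⟨x0, hx0⟩ := hproper_top
    have h := hv x0
    rw [htop, EReal.add_top_of_ne_bot (EReal.coe_ne_bot _), EReal.coe_zero, add_zero] at h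
    exact hx0 (top_le_iff.mp h)
  set gxp : ℝ := (g xp).toReal with hgxp
  have hgxp_eq : g xp = (gxp : EReal) := (EReal.coe_toReal hxp_ne_top (hproper_bot xp)).symm
  intro z
  by_cases hz : g z = ⊤
  · simp only [hF]
    rw [hz]
    rw [show (f z : EReal) + ⊤ = ⊤ from by simp [EReal.add_top_of_ne_bot]]
    rw [EReal.top_add_of_ne_bot (EReal.coe_ne_bot _)]
    exact le_top
  · set gz : ℝ := (g z).toReal with hgz
    have hgz_eq : g z = (gz : EReal) := (EReal.coe_toReal hz (hproper_bot z)).symm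
    -- subgradient inequality in ℝ
    have hsub : ⟪v, z - xp⟫ + gxp ≤ gz := by
      have := hv z
      rw [hgxp_eq, hgz_eq, EReal.coe_zero, add_zero, ← EReal.coe_add, EReal.coe_le_coe_iff] at this
      exact this
    -- v in terms of f' x
    have hv_eq : v = τ • (x - xp) - f' x := by
      have : f' x - τ • (x - xp) + v = 0 := hveq
      abel_nf at this ⊢
      linear_combination (norm := module) this
    have hinner_v : ⟪v, z - xp⟫ = τ * ⟪x - xp, z - xp⟫ - ⟪f' x, z - xp⟫ := by
      rw [hv_eq, inner_sub_left, real_inner_smul_left]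
    -- convexity gradient inequality at z
    have hgrad : f x + ⟪f' x, z - x⟫ ≤ f z := convexOn_gradient_ineq f hf x z (f' x) (hf' x)
    -- inner product splitting
    have hsplit : ⟪f' x, z - x⟫ = ⟪f' x, z - xp⟫ + ⟪f' x, xp - x⟫ := by
      rw [← inner_add_right]
      congr 1
      abel
    -- norm identity
    have hnorm : ‖x - z‖ ^ 2 = ‖x - xp‖ ^ 2 - 2 * ⟪x - xp, z - xp⟫ + ‖z - xp‖ ^ 2 := by
      have h1 : x - z = (x - xp) - (z - xp) := by abel
      rw [h1, @norm_sub_sq_real]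
    simp only [hF]
    rw [hgxp_eq, hgz_eq, ← EReal.coe_add, ← EReal.coe_add, ← EReal.coe_add, ← EReal.coe_add,
      EReal.coe_le_coe_iff]
    nlinarith [hsub, hgrad, hls]
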